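/- Let 2 ≤ a ≤ 12/5 and 0 < c < 2 + a/2. Then there does not exist any convex generator Λ with Λ ≤_{P(a,1),B(c)} e_{1,1}^9, where e_{1,1}^9 is the convex generator consisting of a single edge from (0,9) to (9,0) labeled 'e'. -/

import Mathlib

open Real Set

noncomputable section

/-! ### Symplectic embeddings of subsets of ℝ⁴ ≅ ℂ² -/

/-- ℝ⁴ with coordinates `(x₁, y₁, x₂, y₂)`, identified with ℂ² via `z_j = x_j + i y_j`. -/
abbrev R4 : Type := ℝ × ℝ × ℝ × ℝ

/-- The standard symplectic form `ω = dx₁∧dy₁ + dx₂∧dy₂` on ℝ⁴, as a bilinear pairing. -/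
def omegaStd (v w : R4) : ℝ :=
  v.1 * w.2.1 - v.2.1 * w.1 + v.2.2.1 * w.2.2.2 - v.2.2.2 * w.2.2.1

/-- `X` symplectically embeds into `X'`: there is an injective smooth map `φ` defined on an
open neighborhood `U` of `X` with `φ(X) ⊆ X'`, whose derivative at every point preserves
the standard symplectic form. -/
def SymplecticEmbeds (X X' : Set R4) : Prop :=
  ∃ (U : Set R4) (φ : R4 → R4),
    IsOpen U ∧ X ⊆ U ∧ ContDiffOn ℝ (⊤ : ℕ∞) φ U ∧ Set.InjOn φ U ∧ φ '' X ⊆ X' ∧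
    ∀ p ∈ U, ∀ v w : R4,
      omegaStd (fderiv ℝ φ p v) (fderiv ℝ φ p w) = omegaStd v w

/-- The polydisk `P(a,b) = {z : π|z₁|² ≤ a, π|z₂|² ≤ b}`. -/
def polydisk (a b : ℝ) : Set R4 :=
  {z | π * (z.1 ^ 2 + z.2.1 ^ 2) ≤ a ∧ π * (z.2.2.1 ^ 2 + z.2.2.2 ^ 2) ≤ b}

/-- The ellipsoid `E(a,b) = {z : π|z₁|²/a + π|z₂|²/b ≤ 1}`. -/
def ellipsoid (a b : ℝ) : Set R4 :=
  {z | π * (z.1 ^ 2 + z.2.1 ^ 2) / a + π * (z.2.2.1 ^ 2 + z.2.2.2 ^ 2) / b ≤ 1}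

/-- The ball `B(c) = E(c,c)`. -/
def ball4 (c : ℝ) : Set R4 := ellipsoid c c

/-! ### Convex generators -/

/-- A convex generator, encoded as a commutative formal product of symbols `e_{a,b}` and
`h_{a,b}` over coprime pairs `(a,b)` of nonnegative integers.  `mult (a,b)` is the total
exponent of the direction `(a,b)`, so the corresponding edge of the underlying convex
integral path has displacement vector `(mult (a,b) • a, - mult (a,b) • b)`, and
`hLabel (a,b) = true` iff the factor `h_{a,b}` occurs, i.e. iff this edge is labeled `h`.
No factor `h_{a,b}` may be repeated, and `h_{1,0}`, `h_{0,1}` may not occur (horizontal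
and vertical edges can only be labeled `e`). -/
structure ConvexGenerator where
  mult : ℕ × ℕ → ℕ
  hLabel : ℕ × ℕ → Bool
  coprime_of_mem : ∀ d, mult d ≠ 0 → Nat.Coprime d.1 d.2
  finite_support : {d : ℕ × ℕ | mult d ≠ 0}.Finite
  mult_pos_of_h : ∀ d, hLabel d = true → mult d ≠ 0
  h_ne_horiz : hLabel (1, 0) = false
  h_ne_vert : hLabel (0, 1) = false

namespace ConvexGenerator

/-- `x(Λ)`, the horizontal coordinate of the right endpoint of the path. -/
def xCoord (Λ : ConvexGenerator) : ℕ := ∑ᶠ d : ℕ × ℕ, Λ.mult d * d.1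

/-- `y(Λ)`, the vertical coordinate of the left endpoint of the path. -/
def yCoord (Λ : ConvexGenerator) : ℕ := ∑ᶠ d : ℕ × ℕ, Λ.mult d * d.2

/-- `m(Λ)`, the number of lattice points on the path minus one (the total multiplicity). -/
def mTotal (Λ : ConvexGenerator) : ℕ := ∑ᶠ d : ℕ × ℕ, Λ.mult d

/-- `h(Λ)`, the number of edges labeled `h`. -/
def hCount (Λ : ConvexGenerator) : ℕ := {d : ℕ × ℕ | Λ.hLabel d = true}.ncard

/-- The maximum of the linear functional `(p,q) ↦ b' p + a' q` over the path `Λ`: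
the path starts at `(0, y(Λ))` and the maximum of the functional over the concave path
is obtained by adding all positive increments `m (b' a - a' b)` of its edges
(truncated subtraction implements the positive part). -/
def suppFn (Λ : ConvexGenerator) (a' b' : ℕ) : ℕ :=
  a' * Λ.yCoord + ∑ᶠ d : ℕ × ℕ, Λ.mult d * (b' * d.1 - a' * d.2)

/-- The set of lattice points in the closed region enclosed by the path `Λ` and the two
coordinate axes (including lattice points on the boundary). -/
def latticeRegion (Λ : ConvexGenerator) : Set (ℕ × ℕ) :=
  {p | ∀ a' b' : ℕ, b' * p.1 + a' * p.2 ≤ Λ.suppFn a' b'}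

/-- `L(Λ)`, the number of lattice points enclosed by `Λ` and the axes (boundary included). -/
def LCount (Λ : ConvexGenerator) : ℕ := Λ.latticeRegion.ncard

/-- The ECH index `I(Λ) = 2(L(Λ) - 1) - h(Λ)`. -/
def iIndex (Λ : ConvexGenerator) : ℤ := 2 * ((Λ.LCount : ℤ) - 1) - (Λ.hCount : ℤ)

/-- All edges of `Λ` are labeled `e`. -/
def allE (Λ : ConvexGenerator) : Prop := ∀ d : ℕ × ℕ, Λ.hLabel d = false

/-- The exponent of the factor `e_{a,b}` in the formal product `Λ`. -/
def eExp (Λ : ConvexGenerator) (d : ℕ × ℕ) : ℕ :=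
  Λ.mult d - (if Λ.hLabel d = true then 1 else 0)

/-- The symplectic action `A_Ω(Λ) = Σ_ν max_{p ∈ Ω} (ν⃗ × p)`: the edge in direction
`(a,b)` with multiplicity `m` has `ν⃗ = (m a, -m b)`, and `ν⃗ × p = m (b p₁ + a p₂)`. -/
def action (Λ : ConvexGenerator) (Ω : Set (ℝ × ℝ)) : ℝ :=
  ∑ᶠ d : ℕ × ℕ, (Λ.mult d : ℝ) *
    sSup ((fun p : ℝ × ℝ => (d.2 : ℝ) * p.1 + (d.1 : ℝ) * p.2) '' Ω)

end ConvexGenerator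

/-- `Λ₁` and `Λ₂` have no elliptic orbit in common: no factor `e_{a,b}` appears in both. -/
def NoCommonElliptic (Λ₁ Λ₂ : ConvexGenerator) : Prop :=
  ∀ d : ℕ × ℕ, Λ₁.eExp d = 0 ∨ Λ₂.eExp d = 0

/-- `Λ₁` and `Λ₂` have no hyperbolic orbit in common: no factor `h_{a,b}` appears in both. -/
def NoCommonHyperbolic (Λ₁ Λ₂ : ConvexGenerator) : Prop :=
  ∀ d : ℕ × ℕ, ¬(Λ₁.hLabel d = true ∧ Λ₂.hLabel d = true)

/-- The generator `e_{a,b}^m`: a single edge in the coprime direction `(a,b)` with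
multiplicity `m`, labeled `e`. -/
def eGen (a b : ℕ) (hab : Nat.Coprime a b) (m : ℕ) : ConvexGenerator where
  mult d := if d = (a, b) then m else 0
  hLabel _ := false
  coprime_of_mem := by
    intro d hd
    have hd' : d = (a, b) := by
      by_contra h
      simp [h] at hd
    subst hd'
    exact hab
  finite_support := by
    apply Set.Finite.subset (Set.finite_singleton (a, b))
    intro d hd
    simp only [Set.mem_setOf_eq] at hd
    by_contra h
    simp only [Set.mem_singleton_iff] at h
    simp [h] at hd
  mult_pos_of_h := by intro d h; simp at h
  h_ne_horiz := rfl
  h_ne_vert := rfl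

/-- `e_{1,0}^m`: a horizontal edge of multiplicity `m` labeled `e`. -/
def e10 (m : ℕ) : ConvexGenerator := eGen 1 0 (Nat.coprime_one_left 0) m

/-- `e_{0,1}^m`: a vertical edge of multiplicity `m` labeled `e`. -/
def e01 (m : ℕ) : ConvexGenerator := eGen 0 1 (Nat.coprime_one_right 0) m

/-- `e_{1,1}^m`: a single edge from `(0,m)` to `(m,0)` labeled `e`. -/
def e11 (m : ℕ) : ConvexGenerator := eGen 1 1 (Nat.coprime_one_left 1) m

/-- `e_{b,1}^m`: a single edge with displacement vector `(m b, -m)` labeled `e`. -/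
def eb1 (b m : ℕ) : ConvexGenerator := eGen b 1 (Nat.coprime_one_right b) m

/-- The product of two convex generators (concatenation of formal products; faithful to
the paper's product whenever the factors have no hyperbolic orbit in common). -/
def mulCG (Λ₁ Λ₂ : ConvexGenerator) : ConvexGenerator where
  mult d := Λ₁.mult d + Λ₂.mult d
  hLabel d := Λ₁.hLabel d || Λ₂.hLabel d
  coprime_of_mem := by
    intro d hd
    have hd' : Λ₁.mult d + Λ₂.mult d ≠ 0 := hd
    rcases Nat.eq_zero_or_pos (Λ₁.mult d) with h1 | h1
    · exact Λ₂.coprime_of_mem d (by omega)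
    · exact Λ₁.coprime_of_mem d (by omega)
  finite_support := by
    apply Set.Finite.subset (Λ₁.finite_support.union Λ₂.finite_support)
    intro d hd
    simp only [Set.mem_setOf_eq] at hd
    simp only [Set.mem_union, Set.mem_setOf_eq]
    omega
  mult_pos_of_h := by
    intro d h
    show Λ₁.mult d + Λ₂.mult d ≠ 0
    rcases Bool.or_eq_true_iff.mp h with h' | h'
    · have := Λ₁.mult_pos_of_h d h'; omega
    · have := Λ₂.mult_pos_of_h d h'; omega
  h_ne_horiz := by rw [Bool.or_eq_false_iff]; exact ⟨Λ₁.h_ne_horiz, Λ₂.h_ne_horiz⟩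
  h_ne_vert := by rw [Bool.or_eq_false_iff]; exact ⟨Λ₁.h_ne_vert, Λ₂.h_ne_vert⟩

/-- The product `∏_{i ∈ S} Λᵢ` of a family of convex generators (faithful to the paper's
product whenever the factors pairwise have no hyperbolic orbit in common). -/
def finProd {n : ℕ} (S : Finset (Fin n)) (Λs : Fin n → ConvexGenerator) : ConvexGenerator where
  mult d := ∑ i ∈ S, (Λs i).mult d
  hLabel d := decide (∃ i ∈ S, (Λs i).hLabel d = true)
  coprime_of_mem := by
    intro d hd
    have : ∃ i ∈ S, (Λs i).mult d ≠ 0 := by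
      by_contra hcon
      push_neg at hcon
      exact hd (Finset.sum_eq_zero hcon)
    obtain ⟨i, _, hi⟩ := this
    exact (Λs i).coprime_of_mem d hi
  finite_support := by
    apply Set.Finite.subset
      (Set.Finite.biUnion S.finite_toSet fun i _ => (Λs i).finite_support)
    intro d hd
    simp only [Set.mem_setOf_eq] at hd
    have : ∃ i ∈ S, (Λs i).mult d ≠ 0 := by
      by_contra hcon
      push_neg at hcon
      exact hd (Finset.sum_eq_zero hcon)
    obtain ⟨i, hiS, hi⟩ := this
    exact Set.mem_biUnion hiS hi
  mult_pos_of_h := by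
    intro d h
    obtain ⟨i, hiS, hi⟩ := of_decide_eq_true h
    intro hsum
    rw [Finset.sum_eq_zero_iff] at hsum
    exact (Λs i).mult_pos_of_h d hi (hsum i hiS)
  h_ne_horiz := by
    rw [decide_eq_false_iff_not]
    rintro ⟨i, -, hi⟩
    rw [(Λs i).h_ne_horiz] at hi
    exact Bool.false_ne_true hi
  h_ne_vert := by
    rw [decide_eq_false_iff_not]
    rintro ⟨i, -, hi⟩
    rw [(Λs i).h_ne_vert] at hi
    exact Bool.false_ne_true hi

/-! ### Convex toric domains -/

/-- The moment-map region `Ω` of a convex toric domain: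
`Ω = {(x,y) : 0 ≤ x ≤ A, 0 ≤ y ≤ f(x)}` with `f : [0,A] → ℝ≥0` nonincreasing concave. -/
structure ConvexToricDomain where
  A : ℝ
  A_pos : 0 < A
  f : ℝ → ℝ
  f_nonneg : ∀ x ∈ Set.Icc (0 : ℝ) A, 0 ≤ f x
  f_anti : AntitoneOn f (Set.Icc (0 : ℝ) A)
  f_concave : ConcaveOn ℝ (Set.Icc (0 : ℝ) A) f

namespace ConvexToricDomain

/-- The region `Ω ⊆ ℝ²`. -/
def Omega (D : ConvexToricDomain) : Set (ℝ × ℝ) :=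
  {p | 0 ≤ p.1 ∧ p.1 ≤ D.A ∧ 0 ≤ p.2 ∧ p.2 ≤ D.f p.1}

/-- The toric domain `X_Ω = {z ∈ ℂ² : (π|z₁|², π|z₂|²) ∈ Ω}` as a subset of ℝ⁴. -/
def toDomain (D : ConvexToricDomain) : Set R4 :=
  {z | (π * (z.1 ^ 2 + z.2.1 ^ 2), π * (z.2.2.1 ^ 2 + z.2.2.2 ^ 2)) ∈ D.Omega}

end ConvexToricDomain

/-- The moment region of the polydisk `P(a,b)`: the rectangle `[0,a] × [0,b]`. -/
def rectOmega (a b : ℝ) : Set (ℝ × ℝ) :=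
  {p | 0 ≤ p.1 ∧ p.1 ≤ a ∧ 0 ≤ p.2 ∧ p.2 ≤ b}

/-- The moment region of the ellipsoid `E(a,b)`: the triangle with vertices
`(0,0)`, `(a,0)`, `(0,b)`. -/
def triOmega (a b : ℝ) : Set (ℝ × ℝ) :=
  {p | 0 ≤ p.1 ∧ 0 ≤ p.2 ∧ p.1 / a + p.2 / b ≤ 1}

/-- `Λ ≤_{Ω,Ω'} Λ'` (Definition 1.16 of the paper, for `Λ'` with all edges `e`):
(i) equal ECH indices, (ii) `A_Ω(Λ) ≤ A_{Ω'}(Λ')`, and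
(iii) `x(Λ) + y(Λ) - h(Λ)/2 ≥ x(Λ') + y(Λ') + m(Λ') - 1`. -/
def genLE (Ω Ω' : Set (ℝ × ℝ)) (Λ Λ' : ConvexGenerator) : Prop :=
  Λ.iIndex = Λ'.iIndex ∧
  Λ.action Ω ≤ Λ'.action Ω' ∧
  ((Λ'.xCoord : ℝ) + (Λ'.yCoord : ℝ) + (Λ'.mTotal : ℝ) - 1 ≤
    (Λ.xCoord : ℝ) + (Λ.yCoord : ℝ) - (Λ.hCount : ℝ) / 2)

/-- `Λ` is minimal for the convex toric domain with moment region `Ω`: all edges of `Λ`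
are labeled `e`, and `Λ` uniquely minimizes the action among convex generators with the
same ECH index and all edges labeled `e`. -/
def IsMinimal (Ω : Set (ℝ × ℝ)) (Λ : ConvexGenerator) : Prop :=
  Λ.allE ∧ ∀ Λ' : ConvexGenerator, Λ'.allE → Λ'.iIndex = Λ.iIndex → Λ' ≠ Λ →
    Λ.action Ω < Λ'.action Ω

end

section Aux

open ConvexGenerator

lemma finsum_e11_mul (g : ℕ × ℕ → ℕ) :
    ∑ᶠ d : ℕ × ℕ, (e11 9).mult d * g d = 9 * g (1, 1) := by
  rw [finsum_eq_single _ ((1, 1) : ℕ × ℕ)]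
  · simp [e11, eGen]
  · intro d hd
    show (if d = (1, 1) then 9 else 0) * g d = 0
    rw [if_neg hd, zero_mul]

lemma e11_xCoord : (e11 9).xCoord = 9 := by
  have := finsum_e11_mul (fun d => d.1)
  simpa [ConvexGenerator.xCoord] using this

lemma e11_yCoord : (e11 9).yCoord = 9 := by
  have := finsum_e11_mul (fun d => d.2)
  simpa [ConvexGenerator.yCoord] using this

lemma e11_mTotal : (e11 9).mTotal = 9 := by
  have := finsum_e11_mul (fun _ => 1)
  simpa [ConvexGenerator.mTotal] using this

lemma e11_hCount : (e11 9).hCount = 0 := by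
  unfold ConvexGenerator.hCount
  convert Set.ncard_empty (ℕ × ℕ) using 2
  ext d
  simp [e11, eGen]

lemma e11_suppFn (a' b' : ℕ) : (e11 9).suppFn a' b' = a' * 9 + 9 * (b' - a') := by
  unfold ConvexGenerator.suppFn
  rw [e11_yCoord, finsum_e11_mul (fun d => b' * d.1 - a' * d.2)]
  simp

lemma e11_latticeRegion :
    (e11 9).latticeRegion =
      ↑((Finset.range 10 ×ˢ Finset.range 10).filter fun p : ℕ × ℕ => p.1 + p.2 ≤ 9) := by
  ext p
  simp only [ConvexGenerator.latticeRegion, Set.mem_setOf_eq, Finset.coe_filter,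
    Finset.mem_product, Finset.mem_range]
  constructor
  · intro h
    have h11 := h 1 1
    rw [e11_suppFn] at h11
    omega
  · rintro ⟨⟨h1, h2⟩, h9⟩
    intro a' b'
    rw [e11_suppFn]
    rcases le_total a' b' with hab | hab
    · calc b' * p.1 + a' * p.2 ≤ b' * p.1 + b' * p.2 :=
            Nat.add_le_add_left (Nat.mul_le_mul hab le_rfl) _
        _ = b' * (p.1 + p.2) := by ring
        _ ≤ b' * 9 := Nat.mul_le_mul le_rfl h9
        _ ≤ a' * 9 + 9 * (b' - a') := by omega
    · calc b' * p.1 + a' * p.2 ≤ a' * p.1 + a' * p.2 :=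
            Nat.add_le_add_right (Nat.mul_le_mul hab le_rfl) _
        _ = a' * (p.1 + p.2) := by ring
        _ ≤ a' * 9 := Nat.mul_le_mul le_rfl h9
        _ ≤ a' * 9 + 9 * (b' - a') := Nat.le_add_right _ _

lemma e11_LCount : (e11 9).LCount = 55 := by
  unfold ConvexGenerator.LCount
  rw [e11_latticeRegion, Set.ncard_coe_finset]
  decide

lemma e11_iIndex : (e11 9).iIndex = 108 := by
  unfold ConvexGenerator.iIndex
  rw [e11_LCount, e11_hCount]
  norm_num

lemma suppFn_zero_one (Λ : ConvexGenerator) : Λ.suppFn 0 1 = Λ.xCoord := by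
  unfold ConvexGenerator.suppFn ConvexGenerator.xCoord
  simp only [zero_mul, one_mul, Nat.sub_zero, zero_add]

lemma suppFn_one_zero (Λ : ConvexGenerator) : Λ.suppFn 1 0 = Λ.yCoord := by
  unfold ConvexGenerator.suppFn ConvexGenerator.yCoord
  simp only [zero_mul, one_mul, Nat.zero_sub, mul_zero, finsum_zero, add_zero]

lemma latticeRegion_subset (Λ : ConvexGenerator) :
    Λ.latticeRegion ⊆
      ↑(Finset.range (Λ.xCoord + 1) ×ˢ Finset.range (Λ.yCoord + 1)) := by
  intro p hp
  have h1 := hp 0 1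
  have h2 := hp 1 0
  rw [suppFn_zero_one] at h1
  rw [suppFn_one_zero] at h2
  simp only [Finset.mem_coe, Finset.mem_product, Finset.mem_range]
  omega

lemma LCount_le (Λ : ConvexGenerator) :
    Λ.LCount ≤ (Λ.xCoord + 1) * (Λ.yCoord + 1) := by
  unfold ConvexGenerator.LCount
  calc Λ.latticeRegion.ncard
      ≤ (↑(Finset.range (Λ.xCoord + 1) ×ˢ Finset.range (Λ.yCoord + 1)) :
          Set (ℕ × ℕ)).ncard :=
        Set.ncard_le_ncard (latticeRegion_subset Λ) (Finset.finite_toSet _)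
    _ = (Λ.xCoord + 1) * (Λ.yCoord + 1) := by
        rw [Set.ncard_coe_finset, Finset.card_product, Finset.card_range,
          Finset.card_range]

lemma xCoord_sum (Λ : ConvexGenerator) :
    Λ.xCoord = ∑ d ∈ Λ.finite_support.toFinset, Λ.mult d * d.1 := by
  apply finsum_eq_finset_sum_of_support_subset
  intro d hd
  simp only [Function.mem_support] at hd
  rw [Set.Finite.coe_toFinset]
  intro h
  simp [h] at hd

lemma yCoord_sum (Λ : ConvexGenerator) :
    Λ.yCoord = ∑ d ∈ Λ.finite_support.toFinset, Λ.mult d * d.2 := by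
  apply finsum_eq_finset_sum_of_support_subset
  intro d hd
  simp only [Function.mem_support] at hd
  rw [Set.Finite.coe_toFinset]
  intro h
  simp [h] at hd

lemma action_rect_ge (Λ : ConvexGenerator) {a : ℝ} (ha : 0 < a) :
    (Λ.xCoord : ℝ) + a * (Λ.yCoord : ℝ) ≤ Λ.action (rectOmega a 1) := by
  classical
  set S := Λ.finite_support.toFinset with hS
  have haction : Λ.action (rectOmega a 1) =
      ∑ d ∈ S, (Λ.mult d : ℝ) *
        sSup ((fun p : ℝ × ℝ => (d.2 : ℝ) * p.1 + (d.1 : ℝ) * p.2) '' rectOmega a 1) := by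
    apply finsum_eq_finset_sum_of_support_subset
    intro d hd
    simp only [Function.mem_support] at hd
    rw [hS, Set.Finite.coe_toFinset]
    intro h
    simp [h] at hd
  have key : ∀ d : ℕ × ℕ,
      (d.2 : ℝ) * a + (d.1 : ℝ) ≤
        sSup ((fun p : ℝ × ℝ => (d.2 : ℝ) * p.1 + (d.1 : ℝ) * p.2) '' rectOmega a 1) := by
    intro d
    apply le_csSup
    · refine ⟨(d.2 : ℝ) * a + (d.1 : ℝ), ?_⟩
      rintro z ⟨p, ⟨hp1, hp2, hp3, hp4⟩, rfl⟩
      have t1 : (d.2 : ℝ) * p.1 ≤ (d.2 : ℝ) * a :=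
        mul_le_mul_of_nonneg_left hp2 (Nat.cast_nonneg _)
      have t2 : (d.1 : ℝ) * p.2 ≤ (d.1 : ℝ) * 1 :=
        mul_le_mul_of_nonneg_left hp4 (Nat.cast_nonneg _)
      simp only
      linarith
    · exact ⟨(a, 1), ⟨ha.le, le_rfl, zero_le_one, le_rfl⟩, by simp⟩
  have heq : (Λ.xCoord : ℝ) + a * (Λ.yCoord : ℝ) =
      ∑ d ∈ S, (Λ.mult d : ℝ) * ((d.2 : ℝ) * a + (d.1 : ℝ)) := by
    rw [xCoord_sum Λ, yCoord_sum Λ]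
    push_cast
    rw [Finset.mul_sum, ← Finset.sum_add_distrib]
    apply Finset.sum_congr rfl
    intros
    ring
  rw [heq, haction]
  apply Finset.sum_le_sum
  intro d _
  exact mul_le_mul_of_nonneg_left (key d) (Nat.cast_nonneg _)

lemma e11_action_le {c : ℝ} (hc0 : 0 < c) :
    (e11 9).action (triOmega c c) ≤ 9 * c := by
  unfold ConvexGenerator.action
  rw [finsum_eq_single _ ((1, 1) : ℕ × ℕ)]
  · have hm : ((e11 9).mult (1, 1) : ℝ) = 9 := by norm_num [e11, eGen]
    rw [hm]
    have hs : sSup ((fun p : ℝ × ℝ =>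
        ((((1, 1) : ℕ × ℕ).2 : ℕ) : ℝ) * p.1 + ((((1, 1) : ℕ × ℕ).1 : ℕ) : ℝ) * p.2) ''
          triOmega c c) ≤ c := by
      apply csSup_le
      · exact ⟨_, ⟨(0, 0), ⟨le_rfl, le_rfl, by simp⟩, rfl⟩⟩
      · rintro z ⟨p, ⟨h1, h2, h3⟩, rfl⟩
        rw [← add_div, div_le_one hc0] at h3
        simp only [Nat.cast_one, one_mul]
        linarith
    nlinarith [hs]
  · intro d hd
    have : (e11 9).mult d = 0 := by
      show (if d = (1, 1) then 9 else 0) = 0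
      rw [if_neg hd]
    rw [this]
    simp

end Aux

/-- **Step 3 of the proof of Theorem 1.5**: if `2 ≤ a ≤ 12/5` and `0 < c < 2 + a/2`, then
there is no convex generator `Λ` with `Λ ≤_{P(a,1),B(c)} e_{1,1}^9`. -/
theorem folding_step3 (a c : ℝ) (ha1 : 2 ≤ a) (ha2 : a ≤ 12 / 5) (hc0 : 0 < c)
    (hc : c < 2 + a / 2) :
    ¬ ∃ Λ : ConvexGenerator, genLE (rectOmega a 1) (triOmega c c) Λ (e11 9) := by
  rintro ⟨Λ, hI, hA, hxy⟩
  have ha0 : (0 : ℝ) < a := by linarith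
  -- condition (ii): x + a y ≤ 9 c
  have haction : (Λ.xCoord : ℝ) + a * (Λ.yCoord : ℝ) ≤ 9 * c :=
    le_trans (action_rect_ge Λ ha0) (le_trans hA (e11_action_le hc0))
  -- condition (iii): x + y ≥ 26
  rw [e11_xCoord, e11_yCoord, e11_mTotal] at hxy
  have hh0 : (0 : ℝ) ≤ (Λ.hCount : ℝ) := Nat.cast_nonneg _
  have hxyR : (26 : ℝ) ≤ (Λ.xCoord : ℝ) + (Λ.yCoord : ℝ) := by
    push_cast at hxy ⊢
    linarith
  -- condition (i): L(Λ) ≥ 55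
  rw [e11_iIndex] at hI
  have hL : 55 ≤ Λ.LCount := by
    unfold ConvexGenerator.iIndex at hI
    omega
  have hbound := LCount_le Λ
  -- y ≤ 1
  have hy1 : Λ.yCoord ≤ 1 := by
    by_contra hcon
    push_neg at hcon
    have h2 : (2 : ℝ) ≤ (Λ.yCoord : ℝ) := by exact_mod_cast hcon
    have hprod : (0 : ℝ) ≤ (a - 1) * ((Λ.yCoord : ℝ) - 2) :=
      mul_nonneg (by linarith) (by linarith)
    linarith
  rcases Nat.le_one_iff_eq_zero_or_eq_one.mp hy1 with h0 | h1
  · -- y = 0 : then x ≥ 54 but x ≤ 9c < 28.8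
    rw [h0] at hbound
    have hx54 : 54 ≤ Λ.xCoord := by omega
    have hx54R : (54 : ℝ) ≤ (Λ.xCoord : ℝ) := by exact_mod_cast hx54
    rw [h0] at haction
    push_cast at haction
    linarith
  · -- y = 1 : then x ≥ 27 but x + a ≤ 9c < 18 + 4.5a with a ≤ 2.4
    rw [h1] at hbound
    have hx27 : 27 ≤ Λ.xCoord := by omega
    have hx27R : (27 : ℝ) ≤ (Λ.xCoord : ℝ) := by exact_mod_cast hx27
    rw [h1] at haction
    push_cast at haction
    linarith
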